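/- (Flux invariance.) Let W : ℝ × E → E be C¹ satisfying ∂W/∂t(t, x) + D_x W(t, x)(u(t, x)) + (div u)(t, x) · W(t, x) − D_x u(t, x)(W(t, x)) = 0 for all (t, x), and let σ₀ : [0,1] × [0,1] → E be a C¹ parametrized surface. Then the flux t ↦ ∫₀¹∫₀¹ ⟪ W(t, φ(t, σ₀(s, r))), ∂_s[φ(t, σ₀(s, r))] × ∂_r[φ(t, σ₀(s, r))] ⟫ ds dr is constant in t, where × is the cross product and ⟪·,·⟫ the inner product on E. -/

import Mathlib

noncomputable section

open scoped RealInnerProductSpace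

local notation "E3" => EuclideanSpace ℝ (Fin 3)

/-- divergence of a vector field: trace of its Fréchet derivative. -/
def divv (w : E3 → E3) (x : E3) : ℝ :=
  LinearMap.trace ℝ E3 (fderiv ℝ w x : E3 →ₗ[ℝ] E3)

/-- the usual cross product on `EuclideanSpace ℝ (Fin 3)`. -/
def crossE (a b : E3) : E3 :=
  (WithLp.equiv 2 (Fin 3 → ℝ)).symm
    ![a 1 * b 2 - a 2 * b 1, a 2 * b 0 - a 0 * b 2, a 0 * b 1 - a 1 * b 0]

open Set Metric Real Filter Function
open scoped Topology NNReal

lemma crossE_apply (a b : E3) (i : Fin 3) :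
    crossE a b i = ![a 1 * b 2 - a 2 * b 1, a 2 * b 0 - a 0 * b 2, a 0 * b 1 - a 1 * b 0] i := by
  simp [crossE]

lemma basisFun_eq_single (j : Fin 3) :
    (PiLp.basisFun 2 ℝ (Fin 3)) j = EuclideanSpace.single j (1:ℝ) := by
  rw [PiLp.basisFun_apply]

lemma e3_decomp (z : E3) : z = ∑ j : Fin 3, z j • EuclideanSpace.single j (1:ℝ) := by
  have := (PiLp.basisFun 2 ℝ (Fin 3)).sum_repr z
  simpa [basisFun_eq_single, PiLp.basisFun_repr] using this.symm

lemma clm_apply_comp (A : E3 →L[ℝ] E3) (z : E3) (i : Fin 3) :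
    (A z) i = ∑ j : Fin 3, z j * (A (EuclideanSpace.single j (1:ℝ))) i := by
  conv_lhs => rw [e3_decomp z]
  rw [map_sum]
  simp [Fin.sum_univ_three, PiLp.add_apply, PiLp.smul_apply, smul_eq_mul]

lemma trace_eq (A : E3 →L[ℝ] E3) :
    LinearMap.trace ℝ E3 (A : E3 →ₗ[ℝ] E3)
      = ∑ i : Fin 3, (A (EuclideanSpace.single i (1:ℝ))) i := by
  rw [LinearMap.trace_eq_matrix_trace ℝ (PiLp.basisFun 2 ℝ (Fin 3)) (A : E3 →ₗ[ℝ] E3)]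
  simp [Matrix.trace, Matrix.diag, LinearMap.toMatrix_apply, basisFun_eq_single,
    PiLp.basisFun_repr]

lemma inner_eq_sum (a b : E3) : ⟪a, b⟫ = ∑ i : Fin 3, a i * b i := by
  simp [PiLp.inner_apply, RCLike.inner_apply, mul_comm]

lemma key_alg (A : E3 →L[ℝ] E3) (w p q : E3) :
    ⟪w, crossE (A p) q⟫ + ⟪w, crossE p (A q)⟫ + ⟪crossE p q, A w⟫
      = LinearMap.trace ℝ E3 (A : E3 →ₗ[ℝ] E3) * ⟪w, crossE p q⟫ := by
  simp only [inner_eq_sum, crossE_apply, trace_eq, Fin.sum_univ_three,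
    Matrix.cons_val_zero, Matrix.cons_val_one, Matrix.head_cons, Matrix.cons_val_two,
    Matrix.tail_cons]
  simp only [clm_apply_comp A p, clm_apply_comp A q, clm_apply_comp A w, Fin.sum_univ_three]
  ring

lemma crossE_as_sum (a b : E3) :
    crossE a b = (a 1 * b 2 - a 2 * b 1) • EuclideanSpace.single 0 (1:ℝ)
      + ((a 2 * b 0 - a 0 * b 2) • EuclideanSpace.single 1 (1:ℝ)
      + (a 0 * b 1 - a 1 * b 0) • EuclideanSpace.single 2 (1:ℝ)) := by
  ext i
  fin_cases i <;>
    simp [crossE_apply, PiLp.add_apply, PiLp.smul_apply, EuclideanSpace.single_apply]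

lemma HasDerivAt.crossE' {f g : ℝ → E3} {f' g' : E3} {t : ℝ}
    (hf : HasDerivAt f f' t) (hg : HasDerivAt g g' t) :
    HasDerivAt (fun τ => crossE (f τ) (g τ)) (crossE f' (g t) + crossE (f t) g') t := by
  have hc : ∀ i : Fin 3, HasDerivAt (fun τ => f τ i) (f' i) t := fun i => by
    have := (EuclideanSpace.proj (𝕜 := ℝ) i).hasFDerivAt.comp_hasDerivAt t hf
    simpa [Function.comp_def] using this
  have hd : ∀ i : Fin 3, HasDerivAt (fun τ => g τ i) (g' i) t := fun i => by
    have := (EuclideanSpace.proj (𝕜 := ℝ) i).hasFDerivAt.comp_hasDerivAt t hg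
    simpa [Function.comp_def] using this
  have h0 := (((hc 1).mul (hd 2)).sub ((hc 2).mul (hd 1))).smul_const
      (EuclideanSpace.single (0:Fin 3) (1:ℝ))
  have h1 := (((hc 2).mul (hd 0)).sub ((hc 0).mul (hd 2))).smul_const
      (EuclideanSpace.single (1:Fin 3) (1:ℝ))
  have h2 := (((hc 0).mul (hd 1)).sub ((hc 1).mul (hd 0))).smul_const
      (EuclideanSpace.single (2:Fin 3) (1:ℝ))
  have H := h0.add (h1.add h2)
  have heq : (fun τ => (f τ 1 * g τ 2 - f τ 2 * g τ 1) • EuclideanSpace.single (0:Fin 3) (1:ℝ)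
      + ((f τ 2 * g τ 0 - f τ 0 * g τ 2) • EuclideanSpace.single (1:Fin 3) (1:ℝ)
      + (f τ 0 * g τ 1 - f τ 1 * g τ 0) • EuclideanSpace.single (2:Fin 3) (1:ℝ)))
      = fun τ => crossE (f τ) (g τ) := by
    funext τ; rw [crossE_as_sum]
  simp only [Pi.add_def, Pi.mul_def, Pi.sub_def] at H
  rw [heq] at H
  refine H.congr_deriv ?_
  rw [crossE_as_sum f' (g t), crossE_as_sum (f t) g']
  ext i
  fin_cases i <;>
    simp [PiLp.add_apply, PiLp.smul_apply, EuclideanSpace.single_apply] <;> ring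

lemma gron_two {v : ℝ → E3 → E3} {K : ℝ≥0} {R T : ℝ}
    (hK : ∀ t ∈ Icc (0:ℝ) T, LipschitzOnWith K (v t) (closedBall (0:E3) R))
    {f g : ℝ → E3}
    (hf : ∀ t, HasDerivAt f (v t (f t)) t) (hg : ∀ t, HasDerivAt g (v t (g t)) t)
    (hfm : ∀ t ∈ Icc (0:ℝ) T, f t ∈ closedBall (0:E3) R)
    (hgm : ∀ t ∈ Icc (0:ℝ) T, g t ∈ closedBall (0:E3) R) :
    ∀ t ∈ Icc (0:ℝ) T, dist (f t) (g t) ≤ dist (f 0) (g 0) * exp (K * t) := by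
  intro t ht
  have h := dist_le_of_trajectories_ODE_of_mem
    (v := v) (K := K)
    (s := fun τ => if τ ∈ Icc (0:ℝ) T then closedBall (0:E3) R else (∅ : Set E3))
    (fun τ _ => by
      by_cases hτ : τ ∈ Icc (0:ℝ) T
      · simpa [hτ] using hK τ hτ
      · simp [hτ])
    (fun τ _ => (hf τ).continuousAt.continuousWithinAt)
    (fun τ _ => (hf τ).hasDerivWithinAt)
    (fun τ hτ => by simp [mem_Icc.2 ⟨hτ.1, hτ.2.le⟩, hfm τ ⟨hτ.1, hτ.2.le⟩])
    (fun τ _ => (hg τ).continuousAt.continuousWithinAt)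
    (fun τ _ => (hg τ).hasDerivWithinAt)
    (fun τ hτ => by simp [mem_Icc.2 ⟨hτ.1, hτ.2.le⟩, hgm τ ⟨hτ.1, hτ.2.le⟩])
    le_rfl t ht
  simpa using h

lemma stay {v : ℝ → E3 → E3} {K : ℝ≥0} {R T : ℝ} (hT : 0 ≤ T)
    (hK : ∀ t ∈ Icc (0:ℝ) T, LipschitzOnWith K (v t) (closedBall (0:E3) R))
    {f g : ℝ → E3}
    (hf : ∀ t, HasDerivAt f (v t (f t)) t) (hg : ∀ t, HasDerivAt g (v t (g t)) t)
    (hfm : ∀ t ∈ Icc (0:ℝ) T, f t ∈ closedBall (0:E3) (R - 1))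
    (hd : dist (g 0) (f 0) * exp (K * T) < 1) :
    ∀ t ∈ Icc (0:ℝ) T,
      g t ∈ closedBall (0:E3) R ∧ dist (g t) (f t) ≤ dist (g 0) (f 0) * exp (K * T) := by
  set h : ℝ → ℝ := fun τ => dist (g τ) (f τ) with hh
  have hcont : Continuous h :=
    (continuous_iff_continuousAt.2 fun τ => (hg τ).continuousAt).dist
      (continuous_iff_continuousAt.2 fun τ => (hf τ).continuousAt)
  have hexp1 : (1:ℝ) ≤ exp ((K:ℝ) * T) := one_le_exp (by positivity)
  have hd0 : h 0 < 1 :=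
    lt_of_le_of_lt (le_mul_of_one_le_right dist_nonneg hexp1) hd
  set B : Set ℝ := (Icc (0:ℝ) T ∩ {τ | 1 ≤ h τ}) ∪ {T} with hB
  have hBne : B.Nonempty := ⟨T, Or.inr rfl⟩
  have hBbdd : BddBelow B := by
    refine ⟨0, ?_⟩
    rintro τ (⟨hτ1, _⟩ | rfl)
    · exact hτ1.1
    · exact hT
  have hBclosed : IsClosed B :=
    (isClosed_Icc.inter (isClosed_le continuous_const hcont)).union isClosed_singleton
  set c := sInf B with hc
  have hcB : c ∈ B := hBclosed.csInf_mem hBne hBbdd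
  have hc0 : 0 ≤ c := by
    rcases hcB with ⟨h1, _⟩ | h1
    · exact h1.1
    · rw [h1]; exact hT
  have hcT : c ≤ T := csInf_le hBbdd (Or.inr rfl)
  have hlt : ∀ σ ∈ Ico (0:ℝ) c, h σ < 1 := by
    intro σ hσ
    by_contra hge
    push_neg at hge
    have hσB : σ ∈ B := Or.inl ⟨⟨hσ.1, (hσ.2.trans_le hcT).le⟩, hge⟩
    exact absurd (csInf_le hBbdd hσB) (not_le.2 hσ.2)
  have hle : ∀ σ ∈ Icc (0:ℝ) c, h σ ≤ 1 := by
    intro σ hσ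
    rcases eq_or_lt_of_le hσ.1 with heq0 | hpos
    · rw [← heq0]; exact hd0.le
    · have htend : Filter.Tendsto h (nhdsWithin σ (Iio σ)) (nhds (h σ)) :=
        hcont.continuousAt.continuousWithinAt.tendsto
      refine le_of_tendsto htend ?_
      filter_upwards [Ioo_mem_nhdsLT hpos] with τ hτ
      exact (hlt τ ⟨hτ.1.le, lt_of_lt_of_le hτ.2 hσ.2⟩).le
  have hgm' : ∀ σ ∈ Icc (0:ℝ) c, g σ ∈ closedBall (0:E3) R := by
    intro σ hσ
    have h1 := hle σ hσ
    have h2 := hfm σ ⟨hσ.1, hσ.2.trans hcT⟩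
    rw [mem_closedBall] at h2 ⊢
    calc dist (g σ) 0 ≤ dist (g σ) (f σ) + dist (f σ) 0 := dist_triangle _ _ _
    _ ≤ 1 + (R - 1) := add_le_add h1 h2
    _ = R := by ring
  have hfm'' : ∀ σ ∈ Icc (0:ℝ) c, f σ ∈ closedBall (0:E3) R := fun σ hσ =>
    closedBall_subset_closedBall (by linarith) (hfm σ ⟨hσ.1, hσ.2.trans hcT⟩)
  have hKc : ∀ t ∈ Icc (0:ℝ) c, LipschitzOnWith K (v t) (closedBall (0:E3) R) :=
    fun t ht => hK t ⟨ht.1, ht.2.trans hcT⟩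
  have hgron := gron_two hKc hg hf hgm' hfm''
  have hbnd : ∀ t ∈ Icc (0:ℝ) c, h t ≤ dist (g 0) (f 0) * exp ((K:ℝ) * T) := by
    intro t ht
    refine (hgron t ht).trans ?_
    exact mul_le_mul_of_nonneg_left
      (exp_le_exp.2 (mul_le_mul_of_nonneg_left (ht.2.trans hcT) K.coe_nonneg)) dist_nonneg
  have hceq : c = T := by
    rcases hcB with ⟨_, hge⟩ | heq
    · exact absurd ((hge.trans (hbnd c ⟨hc0, le_rfl⟩)).trans_lt hd) (lt_irrefl _)
    · exact heq
  intro t ht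
  rw [← hceq] at ht
  exact ⟨hgm' t ht, hbnd t ht⟩

section flow
variable {u φ : ℝ → E3 → E3}

lemma hasFDerivAt_slice (hu : ContDiff ℝ (⊤ : ℕ∞) (Function.uncurry u)) (t : ℝ) (y : E3) :
    HasFDerivAt (u t)
      ((fderiv ℝ (Function.uncurry u) (t, y)).comp (ContinuousLinearMap.inr ℝ ℝ E3)) y := by
  have hj : HasFDerivAt (fun z : E3 => ((t, z) : ℝ × E3))
      (ContinuousLinearMap.inr ℝ ℝ E3) y := HasFDerivAt.prodMk (hasFDerivAt_const t y) (hasFDerivAt_id y)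
  exact ((hu.differentiable (by simp) (t, y)).hasFDerivAt).comp y hj

lemma fderiv_slice (hu : ContDiff ℝ (⊤ : ℕ∞) (Function.uncurry u)) (t : ℝ) (y : E3) :
    fderiv ℝ (u t) y
      = (fderiv ℝ (Function.uncurry u) (t, y)).comp (ContinuousLinearMap.inr ℝ ℝ E3) :=
  (hasFDerivAt_slice hu t y).fderiv

lemma cont_Du (hu : ContDiff ℝ (⊤ : ℕ∞) (Function.uncurry u)) :
    Continuous (fun p : ℝ × E3 =>
      (fderiv ℝ (Function.uncurry u) p).comp (ContinuousLinearMap.inr ℝ ℝ E3)) :=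
  ((hu.fderiv_right (m := (⊤ : ℕ∞)) (by simp)).continuous).clm_comp continuous_const

lemma cont_phi_t (hφt : ∀ t X, HasDerivAt (fun τ => φ τ X) (u t (φ t X)) t) (x : E3) :
    Continuous (fun t => φ t x) :=
  continuous_iff_continuousAt.2 fun t => (hφt t x).continuousAt

theorem flow_est (hu : ContDiff ℝ (⊤ : ℕ∞) (Function.uncurry u))
    (hφ0 : ∀ X, φ 0 X = X)
    (hφt : ∀ t X, HasDerivAt (fun τ => φ τ X) (u t (φ t X)) t)
    (hφsmooth : ∀ t, ContDiff ℝ (⊤ : ℕ∞) (φ t))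
    (x : E3) (T : ℝ) (hT : 0 < T) :
    ∃ δ > 0, ∃ C ≥ 0, ∃ R M : ℝ, 0 ≤ M ∧
      (∀ t ∈ Icc (-T) T, ∀ y ∈ closedBall x δ, φ t y ∈ closedBall (0:E3) R) ∧
      (∀ t ∈ Icc (-T) T, ∀ y ∈ closedBall x δ, ∀ z ∈ closedBall x δ,
          dist (φ t y) (φ t z) ≤ C * dist y z) ∧
      (∀ t ∈ Icc (-T) T, ∀ y ∈ ball x δ, ‖fderiv ℝ (φ t) y‖ ≤ C) ∧
      (∀ t ∈ Icc (-T) T, ∀ y ∈ closedBall (0:E3) R, ‖fderiv ℝ (u t) y‖ ≤ M) := by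
  -- reference trajectory is bounded
  obtain ⟨R₀, hR₀⟩ :=
    ((isCompact_Icc.image (cont_phi_t hφt x)).isBounded).subset_closedBall (0 : E3)
  have hR₀mem : ∀ t ∈ Icc (-T) T, φ t x ∈ closedBall (0:E3) R₀ := fun t ht =>
    hR₀ (mem_image_of_mem _ ht)
  set R : ℝ := R₀ + 1 with hR
  -- bound on the spatial derivative of u on the tube
  obtain ⟨M₀, hM₀⟩ := ((isCompact_Icc (a := -T) (b := T)).prod
    (isCompact_closedBall (0:E3) R)).exists_bound_of_continuousOn (cont_Du hu).continuousOn
  set M : ℝ := max M₀ 0 with hMdef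
  have hM0 : 0 ≤ M := le_max_right _ _
  set K : ℝ≥0 := ⟨M, hM0⟩ with hKdef
  have hKcoe : (K : ℝ) = M := rfl
  have hKfd : ∀ t ∈ Icc (-T) T, ∀ y ∈ closedBall (0:E3) R, ‖fderiv ℝ (u t) y‖ ≤ M := by
    intro t ht y hy
    rw [fderiv_slice hu]
    exact le_trans (hM₀ (t, y) (mk_mem_prod ht hy)) (le_max_left _ _)
  have hKlip : ∀ t ∈ Icc (-T) T, LipschitzOnWith K (u t) (closedBall (0:E3) R) := by
    intro t ht
    refine (convex_closedBall _ _).lipschitzOnWith_of_nnnorm_hasFDerivWithin_le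
      (f' := fun y => fderiv ℝ (u t) y)
      (fun y hy => (hasFDerivAt_slice hu t y).differentiableAt.hasFDerivAt.hasFDerivWithinAt)
      (fun y hy => ?_)
    rw [← NNReal.coe_le_coe, coe_nnnorm, hKcoe]
    exact hKfd t ht y hy
  set C : ℝ := exp (M * T) with hCdef
  have hC1 : (1:ℝ) ≤ C := one_le_exp (by positivity)
  have hC0 : (0:ℝ) ≤ C := zero_le_one.trans hC1
  set δ : ℝ := min 1 (exp (-(M * T)) / 2) with hδdef
  have hδpos : 0 < δ := lt_min one_pos (by positivity)
  have hδC : δ * C < 1 := by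
    have h1 : δ ≤ exp (-(M * T)) / 2 := min_le_right _ _
    have h2 : δ * C ≤ (exp (-(M * T)) / 2) * exp (M * T) :=
      mul_le_mul_of_nonneg_right h1 hC0
    have h3 : (exp (-(M * T)) / 2) * exp (M * T) = 1 / 2 := by
      rw [exp_neg]; field_simp
    rw [h3] at h2; linarith
  -- reversed vector field
  set v' : ℝ → E3 → E3 := fun τ y => -(u (-τ) y) with hv'def
  have hKflip : ∀ t ∈ Icc (0:ℝ) T, LipschitzOnWith K (u t) (closedBall (0:E3) R) :=
    fun t ht => hKlip t ⟨by linarith [ht.1], ht.2⟩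
  have hK'lip : ∀ t ∈ Icc (0:ℝ) T, LipschitzOnWith K (v' t) (closedBall (0:E3) R) := by
    intro t ht
    have h := hKlip (-t) ⟨by linarith [ht.2], by linarith [ht.1]⟩
    exact LipschitzOnWith.of_dist_le_mul fun a ha b hb => by
      simpa [hv'def, dist_neg_neg] using h.dist_le_mul a ha b hb
  have htrajf : ∀ (y : E3) (τ : ℝ), HasDerivAt (fun σ => φ σ y) (u τ (φ τ y)) τ :=
    fun y τ => hφt τ y
  have htrajb : ∀ (y : E3) (τ : ℝ), HasDerivAt (fun σ => φ (-σ) y) (v' τ (φ (-τ) y)) τ := by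
    intro y τ
    have h1 := ((hφt (-τ) y).scomp τ (hasDerivAt_neg τ) :
      HasDerivAt ((fun σ => φ σ y) ∘ (fun σ : ℝ => -σ)) ((-1 : ℝ) • u (-τ) (φ (-τ) y)) τ)
    simpa [Function.comp_def, hv'def] using h1
  have hfmf : ∀ t ∈ Icc (0:ℝ) T, φ t x ∈ closedBall (0:E3) (R - 1) := by
    intro t ht
    have := hR₀mem t ⟨by linarith [ht.1], ht.2⟩
    simpa [hR] using this
  have hfmb : ∀ t ∈ Icc (0:ℝ) T, φ (-t) x ∈ closedBall (0:E3) (R - 1) := by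
    intro t ht
    have := hR₀mem (-t) ⟨by linarith [ht.2], by linarith [ht.1]⟩
    simpa [hR] using this
  have hd0 : ∀ y ∈ closedBall x δ, dist (φ 0 y) (φ 0 x) * exp ((K:ℝ) * T) < 1 := by
    intro y hy
    rw [hφ0, hφ0, hKcoe]
    calc dist y x * exp (M * T) ≤ δ * C := by
          exact mul_le_mul_of_nonneg_right (mem_closedBall.1 hy) hC0
    _ < 1 := hδC
  have hstayf : ∀ y ∈ closedBall x δ, ∀ t ∈ Icc (0:ℝ) T,
      φ t y ∈ closedBall (0:E3) R := by
    intro y hy t ht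
    exact (stay hT.le hKflip (htrajf x) (htrajf y) hfmf (hd0 y hy) t ht).1
  have hstayb : ∀ y ∈ closedBall x δ, ∀ t ∈ Icc (0:ℝ) T,
      φ (-t) y ∈ closedBall (0:E3) R := by
    intro y hy t ht
    have hd0' : dist (φ (-(0:ℝ)) y) (φ (-(0:ℝ)) x) * exp ((K:ℝ) * T) < 1 := by
      simpa using hd0 y hy
    exact (stay hT.le hK'lip (htrajb x) (htrajb y) hfmb hd0' t ht).1
  have htube : ∀ t ∈ Icc (-T) T, ∀ y ∈ closedBall x δ, φ t y ∈ closedBall (0:E3) R := by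
    intro t ht y hy
    rcases le_or_gt 0 t with h0 | h0
    · exact hstayf y hy t ⟨h0, ht.2⟩
    · have := hstayb y hy (-t) ⟨by linarith, by linarith [ht.1]⟩
      simpa using this
  have hlip : ∀ t ∈ Icc (-T) T, ∀ y ∈ closedBall x δ, ∀ z ∈ closedBall x δ,
      dist (φ t y) (φ t z) ≤ C * dist y z := by
    intro t ht y hy z hz
    rcases le_or_gt 0 t with h0 | h0
    · have hg := gron_two hKflip (htrajf y) (htrajf z)
        (fun τ hτ => hstayf y hy τ hτ) (fun τ hτ => hstayf z hz τ hτ) t ⟨h0, ht.2⟩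
      rw [hφ0, hφ0, hKcoe] at hg
      refine hg.trans ?_
      rw [mul_comm C _]
      exact mul_le_mul_of_nonneg_left
        (exp_le_exp.2 (mul_le_mul_of_nonneg_left ht.2 hM0)) dist_nonneg
    · have hg := gron_two hK'lip (htrajb y) (htrajb z)
        (fun τ hτ => hstayb y hy τ hτ) (fun τ hτ => hstayb z hz τ hτ) (-t)
        ⟨by linarith, by linarith [ht.1]⟩
      simp only [neg_neg, neg_zero, hφ0, hKcoe] at hg
      refine hg.trans ?_
      rw [mul_comm C _]
      exact mul_le_mul_of_nonneg_left
        (exp_le_exp.2 (mul_le_mul_of_nonneg_left (by linarith [ht.1]) hM0)) dist_nonneg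
  have hfd : ∀ t ∈ Icc (-T) T, ∀ y ∈ ball x δ, ‖fderiv ℝ (φ t) y‖ ≤ C := by
    intro t ht y hy
    have hlipt : LipschitzOnWith C.toNNReal (φ t) (closedBall x δ) := by
      refine LipschitzOnWith.of_dist_le_mul fun a ha b hb => ?_
      rw [Real.coe_toNNReal _ hC0]
      exact hlip t ht a ha b hb
    have hfda := ((hφsmooth t).differentiable (by simp) y).hasFDerivAt
    have := hfda.le_of_lipschitzOn (closedBall_mem_nhds_of_mem hy) hlipt
    rwa [Real.coe_toNNReal _ hC0] at this
  exact ⟨δ, hδpos, C, hC0, R, M, hM0, htube, hlip, hfd, hKfd⟩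

theorem variational (hu : ContDiff ℝ (⊤ : ℕ∞) (Function.uncurry u))
    (hφ0 : ∀ X, φ 0 X = X)
    (hφt : ∀ t X, HasDerivAt (fun τ => φ τ X) (u t (φ t X)) t)
    (hφsmooth : ∀ t, ContDiff ℝ (⊤ : ℕ∞) (φ t))
    (x v : E3) (t₀ : ℝ) :
    HasDerivAt (fun τ => fderiv ℝ (φ τ) x v)
      (fderiv ℝ (u t₀) (φ t₀ x) (fderiv ℝ (φ t₀) x v)) t₀ := by
  set T : ℝ := |t₀| + 1 with hTdef
  have hT : 0 < T := by positivity
  have ht₀mem : t₀ ∈ Ioo (-T) T := by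
    constructor <;> cases abs_cases t₀ <;> simp [hTdef] <;> linarith [abs_nonneg t₀]
  obtain ⟨δ, hδ, C, hC, R, M, hM0, htube, hlipC, hfd, hMb⟩ :=
    flow_est hu hφ0 hφt hφsmooth x T hT
  set a : ℝ := -T with hadef
  set δ' : ℝ := δ / (‖v‖ + 1) with hδ'def
  have hδ'pos : 0 < δ' := by positivity
  have hball : ∀ ε : ℝ, |ε| ≤ δ' → x + ε • v ∈ closedBall x δ := by
    intro ε hε
    rw [mem_closedBall, dist_eq_norm, add_sub_cancel_left, norm_smul, Real.norm_eq_abs]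
    calc |ε| * ‖v‖ ≤ δ' * (‖v‖ + 1) :=
          mul_le_mul hε (by linarith) (norm_nonneg v) hδ'pos.le
    _ = δ := by rw [hδ'def]; field_simp
  have hballo : ∀ ε : ℝ, |ε| < δ' → x + ε • v ∈ ball x δ := by
    intro ε hε
    rw [mem_ball, dist_eq_norm, add_sub_cancel_left, norm_smul, Real.norm_eq_abs]
    calc |ε| * ‖v‖ ≤ |ε| * (‖v‖ + 1) :=
          mul_le_mul_of_nonneg_left (by linarith) (abs_nonneg ε)
    _ < δ' * (‖v‖ + 1) := by
          have : (0:ℝ) < ‖v‖ + 1 := by positivity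
          exact mul_lt_mul_of_pos_right hε this
    _ = δ := by rw [hδ'def]; field_simp
  set η : ℝ → ℝ → E3 := fun ε τ => φ τ (x + ε • v) with hηdef
  set h : ℝ → E3 := fun τ => fderiv ℝ (φ τ) x v with hhdef
  set B : ℝ → E3 := fun τ => fderiv ℝ (u τ) (φ τ x) (h τ) with hBdef
  -- derivative in ε of η
  have hkey : ∀ (τ ε : ℝ),
      HasDerivAt (fun e => η e τ) (fderiv ℝ (φ τ) (x + ε • v) v) ε := by
    intro τ ε
    have hline : HasDerivAt (fun e : ℝ => x + e • v) v ε := by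
      simpa using ((hasDerivAt_id ε).smul_const v).const_add x
    have hφd := ((hφsmooth τ).differentiable (by simp) (x + ε • v)).hasFDerivAt
    simpa [hηdef, Function.comp_def] using hφd.comp_hasDerivAt ε hline
  have hkey0 : ∀ τ : ℝ, HasDerivAt (fun e => η e τ) (h τ) 0 := by
    intro τ
    have := hkey τ 0
    simpa [hhdef] using this
  -- continuity of trajectories and integrands
  have hcontτ : ∀ ε : ℝ, Continuous (fun τ => u τ (η ε τ)) := by
    intro ε
    exact hu.continuous.comp (continuous_id.prodMk (cont_phi_t hφt (x + ε • v)))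
  -- FTC representation
  have hrepr : ∀ (ε : ℝ) (t : ℝ),
      η ε t = η ε a + ∫ τ in a..t, u τ (η ε τ) := by
    intro ε t
    have hder : ∀ τ ∈ Set.uIcc a t, HasDerivAt (fun σ => η ε σ) (u τ (η ε τ)) τ :=
      fun τ _ => hφt τ (x + ε • v)
    have hint : IntervalIntegrable (fun τ => u τ (η ε τ)) MeasureTheory.volume a t :=
      (hcontτ ε).intervalIntegrable a t
    have := intervalIntegral.integral_eq_sub_of_hasDerivAt hder hint
    rw [this]
    abel
  -- measurability of h
  have hmeash : MeasureTheory.StronglyMeasurable h := by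
    apply stronglyMeasurable_of_tendsto (u := Filter.atTop (α := ℕ))
      (f := fun n τ => ((1:ℝ)/(n+1))⁻¹ • (η ((1:ℝ)/(n+1)) τ - η 0 τ))
    · intro n
      refine Continuous.stronglyMeasurable ?_
      exact (continuous_const : Continuous fun _ : ℝ => ((1:ℝ)/(n+1))⁻¹).smul (Continuous.sub (cont_phi_t hφt (x + ((1:ℝ)/(n+1)) • v)) (cont_phi_t hφt (x + (0:ℝ) • v)))
    · rw [tendsto_pi_nhds]
      intro τ
      have hs := hasDerivAt_iff_tendsto_slope.1 (hkey0 τ)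
      have hseq : Filter.Tendsto (fun n : ℕ => (1:ℝ)/(n+1)) Filter.atTop (nhdsWithin 0 {(0:ℝ)}ᶜ) := by
        refine tendsto_nhdsWithin_of_tendsto_nhds_of_eventually_within _
          tendsto_one_div_add_atTop_nhds_zero_nat ?_
        refine Filter.Eventually.of_forall fun n => Set.mem_compl_singleton_iff.2 ?_
        positivity
      have := hs.comp hseq
      refine this.congr ?_
      intro n
      simp [Function.comp, slope, vsub_eq_sub]
  -- continuity of the coefficient
  have hAcont : Continuous (fun τ => fderiv ℝ (u τ) (φ τ x)) := by
    have : (fun τ => fderiv ℝ (u τ) (φ τ x)) = (fun p : ℝ × E3 =>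
        (fderiv ℝ (Function.uncurry u) p).comp (ContinuousLinearMap.inr ℝ ℝ E3))
          ∘ (fun τ => (τ, φ τ x)) := by
      funext τ
      exact fderiv_slice hu τ (φ τ x)
    rw [this]
    exact (cont_Du hu).comp (continuous_id.prodMk (cont_phi_t hφt x))
  have hmeasB : MeasureTheory.StronglyMeasurable B := by
    have : B = (fun p : (E3 →L[ℝ] E3) × E3 => p.1 p.2)
        ∘ (fun τ => (fderiv ℝ (u τ) (φ τ x), h τ)) := rfl
    rw [this]
    exact isBoundedBilinearMap_apply.continuous.comp_stronglyMeasurable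
      (hAcont.stronglyMeasurable.prodMk hmeash)
  -- uniform bounds
  have hsub : ∀ t ∈ Icc a T, Set.uIoc a t ⊆ Icc (-T) T := by
    intro t ht τ hτ
    rw [Set.uIoc_of_le ht.1] at hτ
    exact ⟨le_of_lt hτ.1, hτ.2.trans ht.2⟩
  have hbMCv : ∀ τ ∈ Icc (-T) T, ∀ ε : ℝ, |ε| < δ' →
      ‖fderiv ℝ (u τ) (η ε τ) (fderiv ℝ (φ τ) (x + ε • v) v)‖ ≤ M * (C * ‖v‖) := by
    intro τ hτ ε hε
    have h1 : ‖fderiv ℝ (u τ) (η ε τ)‖ ≤ M :=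
      hMb τ hτ _ (htube τ hτ _ (hball ε hε.le))
    have h2 : ‖fderiv ℝ (φ τ) (x + ε • v) v‖ ≤ C * ‖v‖ := by
      refine le_trans (ContinuousLinearMap.le_opNorm _ v) ?_
      exact mul_le_mul_of_nonneg_right (hfd τ hτ _ (hballo ε hε)) (norm_nonneg v)
    refine le_trans (ContinuousLinearMap.le_opNorm _ _) ?_
    exact mul_le_mul h1 h2 (norm_nonneg _) hM0
  have hbB : ∀ τ ∈ Icc (-T) T, ‖B τ‖ ≤ M * (C * ‖v‖) := by
    intro τ hτ
    have := hbMCv τ hτ 0 (by simpa using hδ'pos)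
    simpa [hηdef, hBdef, hhdef] using this
  -- the key integral identity for h
  have hident : ∀ t ∈ Icc a T, h t = h a + ∫ τ in a..t, B τ := by
    intro t ht
    have hta : a ≤ t := ht.1
    have hF'meas : MeasureTheory.AEStronglyMeasurable
        (fun τ => fderiv ℝ (u τ) (η (0:ℝ) τ) (fderiv ℝ (φ τ) (x + (0:ℝ) • v) v))
        (MeasureTheory.volume.restrict (Set.uIoc a t)) := by
      have heqB : (fun τ => fderiv ℝ (u τ) (η (0:ℝ) τ) (fderiv ℝ (φ τ) (x + (0:ℝ) • v) v))
          = B := by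
        funext τ; simp [hηdef, hBdef, hhdef]
      rw [heqB]
      exact hmeasB.aestronglyMeasurable.restrict
    have hbnd : ∀ᵐ τ ∂MeasureTheory.volume, τ ∈ Set.uIoc a t → ∀ ε ∈ ball (0:ℝ) δ',
        ‖fderiv ℝ (u τ) (η ε τ) (fderiv ℝ (φ τ) (x + ε • v) v)‖ ≤ M * (C * ‖v‖) := by
      refine Filter.Eventually.of_forall fun τ hτmem ε hε => ?_
      rw [mem_ball, dist_zero_right, Real.norm_eq_abs] at hε
      exact hbMCv τ (hsub t ⟨hta, ht.2⟩ hτmem) ε hε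
    have hdiff : ∀ᵐ τ ∂MeasureTheory.volume, τ ∈ Set.uIoc a t → ∀ ε ∈ ball (0:ℝ) δ',
        HasDerivAt (fun e => u τ (η e τ))
          (fderiv ℝ (u τ) (η ε τ) (fderiv ℝ (φ τ) (x + ε • v) v)) ε := by
      refine Filter.Eventually.of_forall fun τ _ ε _ => ?_
      have hud := ((hasFDerivAt_slice hu τ (η ε τ)).differentiableAt).hasFDerivAt
      exact hud.comp_hasDerivAt ε (hkey τ ε)
    have hdom := intervalIntegral.hasDerivAt_integral_of_dominated_loc_of_deriv_le
      (F := fun ε τ => u τ (η ε τ))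
      (F' := fun ε τ => fderiv ℝ (u τ) (η ε τ) (fderiv ℝ (φ τ) (x + ε • v) v))
      (x₀ := (0:ℝ)) (a := a) (b := t) (μ := MeasureTheory.volume)
      (bound := fun _ => M * (C * ‖v‖)) (ball_mem_nhds _ hδ'pos)
      (Filter.Eventually.of_forall fun ε => ((hcontτ ε).aestronglyMeasurable).restrict)
      ((hcontτ 0).intervalIntegrable a t)
      hF'meas hbnd intervalIntegrable_const hdiff
    have Hl : HasDerivAt (fun ε => η ε t) (h t) 0 := hkey0 t
    have Ha : HasDerivAt (fun ε => η ε a) (h a) 0 := hkey0 a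
    have Hr := Ha.add hdom.2
    have funeq : (fun ε => η ε t) = fun ε => η ε a + ∫ τ in a..t, u τ (η ε τ) :=
      funext fun ε => hrepr ε t
    rw [funeq] at Hl
    have huniq := Hl.unique Hr
    rw [huniq]
    congr 1
    refine intervalIntegral.integral_congr fun τ hτ => ?_
    simp [hBdef, hhdef, hηdef]
  -- interval integrability of B
  have hBint : ∀ s ∈ Icc a T, ∀ t ∈ Icc a T, IntervalIntegrable B MeasureTheory.volume s t := by
    intro s hs t ht
    have hsubst : Set.uIoc s t ⊆ Icc a T := by
      intro τ hτ
      rcases Set.mem_uIoc.1 hτ with h1 | h1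
      · exact ⟨le_trans hs.1 h1.1.le, h1.2.trans ht.2⟩
      · exact ⟨le_trans ht.1 h1.1.le, h1.2.trans hs.2⟩
    rw [intervalIntegrable_iff]
    refine MeasureTheory.Integrable.mono' (g := fun _ => M * (C * ‖v‖))
      ((MeasureTheory.integrableOn_const_iff enorm_ne_top).2 (Or.inr measure_Ioc_lt_top))
      hmeasB.aestronglyMeasurable.restrict ?_
    rw [MeasureTheory.ae_restrict_iff' measurableSet_uIoc]
    exact Filter.Eventually.of_forall fun τ hτ => hbB τ (hsubst hτ)
  -- h is Lipschitz on Icc a T, hence continuous at t₀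
  have hlips : LipschitzOnWith (Real.toNNReal (M * (C * ‖v‖))) h (Icc a T) := by
    refine LipschitzOnWith.of_dist_le_mul fun s hs t ht => ?_
    rw [Real.coe_toNNReal _ (by positivity)]
    have e1 : h s - h t = ∫ τ in t..s, B τ := by
      rw [hident s hs, hident t ht]
      rw [show h a + (∫ τ in a..s, B τ) - (h a + ∫ τ in a..t, B τ)
        = (∫ τ in a..s, B τ) - ∫ τ in a..t, B τ by abel]
      exact intervalIntegral.integral_interval_sub_left
        (hBint a ⟨le_rfl, by linarith⟩ s hs) (hBint a ⟨le_rfl, by linarith⟩ t ht)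
    rw [dist_eq_norm, e1]
    refine le_trans (intervalIntegral.norm_integral_le_of_norm_le_const
      (C := M * (C * ‖v‖)) fun τ hτ => ?_) ?_
    · refine hbB τ ?_
      rcases Set.mem_uIoc.1 hτ with h1 | h1
      · exact ⟨le_trans ht.1 h1.1.le, h1.2.trans hs.2⟩
      · exact ⟨le_trans hs.1 h1.1.le, h1.2.trans ht.2⟩
    · rw [Real.dist_eq]
  have hcontAth : ContinuousAt h t₀ :=
    (hlips.continuousOn.continuousAt (Icc_mem_nhds ht₀mem.1 ht₀mem.2))
  have hBcontAt : ContinuousAt B t₀ := by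
    have : B = (fun p : (E3 →L[ℝ] E3) × E3 => p.1 p.2)
        ∘ (fun τ => (fderiv ℝ (u τ) (φ τ x), h τ)) := rfl
    rw [this]
    exact (isBoundedBilinearMap_apply.continuous.continuousAt).comp
      (hAcont.continuousAt.prodMk hcontAth)
  have hFTC := intervalIntegral.integral_hasDerivAt_right
    (hBint a ⟨le_rfl, by linarith⟩ t₀ ⟨ht₀mem.1.le, ht₀mem.2.le⟩)
    (hmeasB.stronglyMeasurableAtFilter) hBcontAt
  have hEv : h =ᶠ[nhds t₀] fun s => h a + ∫ τ in a..s, B τ :=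
    Filter.eventuallyEq_of_mem (Icc_mem_nhds ht₀mem.1 ht₀mem.2) hident
  have hfin : HasDerivAt h (B t₀) t₀ :=
    (hFTC.const_add (h a)).congr_of_eventuallyEq hEv
  simpa [hhdef, hBdef] using hfin


theorem W_deriv {W : ℝ → E3 → E3} (hW : ContDiff ℝ 1 (Function.uncurry W))
    (hφt : ∀ t X, HasDerivAt (fun τ => φ τ X) (u t (φ t X)) t) (t : ℝ) (x : E3) :
    HasDerivAt (fun τ => W τ (φ τ x))
      (deriv (fun τ => W τ (φ t x)) t + fderiv ℝ (W t) (φ t x) (u t (φ t x))) t := by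
  have hWd : Differentiable ℝ (Function.uncurry W) := hW.differentiable (by simp)
  set y := φ t x with hy
  set L := fderiv ℝ (Function.uncurry W) (t, y) with hL
  have hLd : HasFDerivAt (Function.uncurry W) L (t, y) := (hWd (t, y)).hasFDerivAt
  have hγ : HasDerivAt (fun τ => ((τ, φ τ x) : ℝ × E3)) ((1:ℝ), u t y) t :=
    HasDerivAt.prodMk (hasDerivAt_id t) (hφt t x)
  have hcomp : HasDerivAt (fun τ => W τ (φ τ x)) (L (1, u t y)) t :=
    (hLd.comp_hasDerivAt t hγ :)
  have h1 : HasDerivAt (fun τ => W τ y) (L (1, 0)) t := by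
    have hγ1 : HasDerivAt (fun τ => ((τ, y) : ℝ × E3)) ((1:ℝ), (0:E3)) t :=
      HasDerivAt.prodMk (hasDerivAt_id t) (hasDerivAt_const t y)
    exact hLd.comp_hasDerivAt t hγ1
  have hderiv1 : deriv (fun τ => W τ y) t = L (1, 0) := h1.deriv
  have h2 : HasFDerivAt (W t) (L.comp (ContinuousLinearMap.inr ℝ ℝ E3)) y := by
    have hj : HasFDerivAt (fun z : E3 => ((t, z) : ℝ × E3))
        (ContinuousLinearMap.inr ℝ ℝ E3) y := HasFDerivAt.prodMk (hasFDerivAt_const t y) (hasFDerivAt_id y)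
    exact hLd.comp y hj
  have hfd2 : fderiv ℝ (W t) y = L.comp (ContinuousLinearMap.inr ℝ ℝ E3) := h2.fderiv
  have hsplit : L (1, u t y) = L (1, 0) + L (0, u t y) := by
    rw [← map_add]
    norm_num
  rw [hderiv1, hfd2]
  rw [show (L.comp (ContinuousLinearMap.inr ℝ ℝ E3)) (u t y) = L (0, u t y) from rfl]
  rw [← hsplit]
  exact hcomp

theorem G_const {W : ℝ → E3 → E3}
    (hu : ContDiff ℝ (⊤ : ℕ∞) (Function.uncurry u))
    (hφ0 : ∀ X, φ 0 X = X)
    (hφt : ∀ t X, HasDerivAt (fun τ => φ τ X) (u t (φ t X)) t)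
    (hφsmooth : ∀ t, ContDiff ℝ (⊤ : ℕ∞) (φ t))
    (hW : ContDiff ℝ 1 (Function.uncurry W))
    (hLie : ∀ t x, deriv (fun τ => W τ x) t + fderiv ℝ (W t) x (u t x)
        + divv (u t) x • W t x - fderiv ℝ (u t) x (W t x) = 0)
    (x vs vr : E3) (t₁ t₂ : ℝ) :
    ⟪W t₁ (φ t₁ x), crossE (fderiv ℝ (φ t₁) x vs) (fderiv ℝ (φ t₁) x vr)⟫
      = ⟪W t₂ (φ t₂ x), crossE (fderiv ℝ (φ t₂) x vs) (fderiv ℝ (φ t₂) x vr)⟫ := by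
  have H : ∀ t : ℝ, HasDerivAt (fun τ =>
      ⟪W τ (φ τ x), crossE (fderiv ℝ (φ τ) x vs) (fderiv ℝ (φ τ) x vr)⟫) 0 t := by
    intro t
    set y := φ t x with hy
    set A := fderiv ℝ (u t) y with hA
    set P := fderiv ℝ (φ t) x vs with hP
    set Q := fderiv ℝ (φ t) x vr with hQ
    set Wc := W t y with hWc
    set Wdot := deriv (fun τ => W τ y) t + fderiv ℝ (W t) y (u t y) with hWdot
    have HW : HasDerivAt (fun τ => W τ (φ τ x)) Wdot t := W_deriv hW hφt t x
    have HP : HasDerivAt (fun τ => fderiv ℝ (φ τ) x vs) (A P) t :=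
      variational hu hφ0 hφt hφsmooth x vs t
    have HQ : HasDerivAt (fun τ => fderiv ℝ (φ τ) x vr) (A Q) t :=
      variational hu hφ0 hφt hφsmooth x vr t
    have Hcross := HP.crossE' HQ
    have HG := HW.inner ℝ Hcross
    set cr := crossE P Q with hcr
    -- the Lie transport equation
    have hlie := hLie t y
    have hWdoteq : Wdot = A Wc - divv (u t) y • Wc := by
      rw [hWdot]
      have h1 : (deriv (fun τ => W τ y) t + fderiv ℝ (W t) y (u t y))
          + divv (u t) y • W t y = fderiv ℝ (u t) y (W t y) := sub_eq_zero.mp hlie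
      exact eq_sub_of_add_eq h1
    have key := key_alg A Wc P Q
    have hcomm : ⟪cr, A Wc⟫ = ⟪A Wc, cr⟫ := real_inner_comm _ _
    have hdiv : divv (u t) y = LinearMap.trace ℝ E3 (A : E3 →ₗ[ℝ] E3) := rfl
    have hzero : ⟪Wc, crossE (A P) Q + crossE P (A Q)⟫ + ⟪Wdot, cr⟫ = 0 := by
      rw [inner_add_right, hWdoteq, inner_sub_left, real_inner_smul_left, hdiv]
      linarith [key, hcomm]
    rw [hzero] at HG
    exact HG
  have hdiffG := fun t => (H t).differentiableAt
  have hderivG := fun t => (H t).deriv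
  exact is_const_of_deriv_eq_zero (fun t => hdiffG t) hderivG t₁ t₂

end flow


/-- Flux invariance. The flux of a vector field `W` whose
associated 2-form is moving with the fluid through any convected surface is
constant in time. -/
theorem flux_invariance
    (u φ : ℝ → E3 → E3)
    (hu : ContDiff ℝ (⊤ : ℕ∞) (Function.uncurry u))
    (hφ0 : ∀ X, φ 0 X = X)
    (hφt : ∀ t X, HasDerivAt (fun τ => φ τ X) (u t (φ t X)) t)
    (hφsmooth : ∀ t, ContDiff ℝ (⊤ : ℕ∞) (φ t))
    (hφbij : ∀ t, Function.Bijective (φ t))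
    (hφinv : ∀ t, ContDiff ℝ (⊤ : ℕ∞) (Function.invFun (φ t)))
    (W : ℝ → E3 → E3)
    (hW : ContDiff ℝ 1 (Function.uncurry W))
    (hLie : ∀ t x, deriv (fun τ => W τ x) t + fderiv ℝ (W t) x (u t x)
        + divv (u t) x • W t x - fderiv ℝ (u t) x (W t x) = 0)
    (σ₀ : ℝ → ℝ → E3)
    (hσ₀ : ContDiff ℝ 1 (Function.uncurry σ₀)) :
    ∀ t₁ t₂ : ℝ,
      (∫ s in (0:ℝ)..1, ∫ r in (0:ℝ)..1,
        ⟪W t₁ (φ t₁ (σ₀ s r)),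
          crossE (deriv (fun s' => φ t₁ (σ₀ s' r)) s)
                 (deriv (fun r' => φ t₁ (σ₀ s r')) r)⟫)
      = ∫ s in (0:ℝ)..1, ∫ r in (0:ℝ)..1,
        ⟪W t₂ (φ t₂ (σ₀ s r)),
          crossE (deriv (fun s' => φ t₂ (σ₀ s' r)) s)
                 (deriv (fun r' => φ t₂ (σ₀ s r')) r)⟫ := by
  intro t₁ t₂
  have hσd : Differentiable ℝ (Function.uncurry σ₀) := hσ₀.differentiable (by simp)
  have hds : ∀ (t s r : ℝ), deriv (fun s' => φ t (σ₀ s' r)) s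
      = fderiv ℝ (φ t) (σ₀ s r)
          (fderiv ℝ (Function.uncurry σ₀) (s, r) ((1:ℝ), (0:ℝ))) := by
    intro t s r
    have h1 : HasDerivAt (fun s' => σ₀ s' r)
        (fderiv ℝ (Function.uncurry σ₀) (s, r) ((1:ℝ), (0:ℝ))) s := by
      have := (hσd (s, r)).hasFDerivAt.comp_hasDerivAt s
        (HasDerivAt.prodMk (hasDerivAt_id s) (hasDerivAt_const s r))
      simpa [Function.uncurry, Function.comp_def] using this
    have h2 := (((hφsmooth t).differentiable (by simp)) (σ₀ s r)).hasFDerivAt.comp_hasDerivAt s h1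
    have h3 : HasDerivAt (fun s' => φ t (σ₀ s' r))
        (fderiv ℝ (φ t) (σ₀ s r)
          (fderiv ℝ (Function.uncurry σ₀) (s, r) ((1:ℝ), (0:ℝ)))) s := by
      simpa [Function.comp_def] using h2
    exact h3.deriv
  have hdr : ∀ (t s r : ℝ), deriv (fun r' => φ t (σ₀ s r')) r
      = fderiv ℝ (φ t) (σ₀ s r)
          (fderiv ℝ (Function.uncurry σ₀) (s, r) ((0:ℝ), (1:ℝ))) := by
    intro t s r
    have h1 : HasDerivAt (fun r' => σ₀ s r')
        (fderiv ℝ (Function.uncurry σ₀) (s, r) ((0:ℝ), (1:ℝ))) r := by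
      have := (hσd (s, r)).hasFDerivAt.comp_hasDerivAt r
        (HasDerivAt.prodMk (hasDerivAt_const r s) (hasDerivAt_id r))
      simpa [Function.uncurry, Function.comp_def] using this
    have h2 := (((hφsmooth t).differentiable (by simp)) (σ₀ s r)).hasFDerivAt.comp_hasDerivAt r h1
    have h3 : HasDerivAt (fun r' => φ t (σ₀ s r'))
        (fderiv ℝ (φ t) (σ₀ s r)
          (fderiv ℝ (Function.uncurry σ₀) (s, r) ((0:ℝ), (1:ℝ)))) r := by
      simpa [Function.comp_def] using h2
    exact h3.deriv
  have hpt : ∀ s r : ℝ,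
      ⟪W t₁ (φ t₁ (σ₀ s r)),
        crossE (deriv (fun s' => φ t₁ (σ₀ s' r)) s)
               (deriv (fun r' => φ t₁ (σ₀ s r')) r)⟫
      = ⟪W t₂ (φ t₂ (σ₀ s r)),
        crossE (deriv (fun s' => φ t₂ (σ₀ s' r)) s)
               (deriv (fun r' => φ t₂ (σ₀ s r')) r)⟫ := by
    intro s r
    rw [hds t₁ s r, hdr t₁ s r, hds t₂ s r, hdr t₂ s r]
    exact G_const hu hφ0 hφt hφsmooth hW hLie (σ₀ s r) _ _ t₁ t₂
  have houter : (fun s => ∫ r in (0:ℝ)..1,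
      ⟪W t₁ (φ t₁ (σ₀ s r)),
        crossE (deriv (fun s' => φ t₁ (σ₀ s' r)) s)
               (deriv (fun r' => φ t₁ (σ₀ s r')) r)⟫)
      = fun s => ∫ r in (0:ℝ)..1,
      ⟪W t₂ (φ t₂ (σ₀ s r)),
        crossE (deriv (fun s' => φ t₂ (σ₀ s' r)) s)
               (deriv (fun r' => φ t₂ (σ₀ s r')) r)⟫ :=
    funext fun s => intervalIntegral.integral_congr fun r _ => hpt s r
  rw [houter]
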